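/- Let m ≥ 2 and let A, B be complex random samples as in the context with 𝔼[A] = 𝔼[B] = 0 and 𝔼[AB] = 0 (but 𝔼[A·conj(B)] possibly nonzero). Then the estimator c₄⁽ᶜᵇ⁾ = ( (m+1)·\overline{|A|²|B|²} − m·( \overline{|A|²}·\overline{|B|²} + \overline{A·conj(B)}·\overline{conj(A)·B} ) ) / (m−1) satisfies 𝔼[c₄⁽ᶜᵇ⁾] = 𝔼[|A|²|B|²] − 𝔼[|A|²]𝔼[|B|²] − 𝔼[A·conj(B)]·𝔼[conj(A)·B], which under the stated conditions equals the fourth cumulant C₄(a, a*, b, b*). -/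

import Mathlib

open MeasureTheory ProbabilityTheory

noncomputable def cum4 {Ω : Type*} [MeasurableSpace Ω] (μ : MeasureTheory.Measure Ω)
    (x y z w : Ω → ℂ) : ℂ :=
  (∫ ω, x ω * y ω * z ω * w ω ∂μ)
  - (∫ ω, x ω * y ω * z ω ∂μ) * (∫ ω, w ω ∂μ)
  - (∫ ω, x ω * y ω * w ω ∂μ) * (∫ ω, z ω ∂μ)
  - (∫ ω, x ω * z ω * w ω ∂μ) * (∫ ω, y ω ∂μ)
  - (∫ ω, y ω * z ω * w ω ∂μ) * (∫ ω, x ω ∂μ)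
  - (∫ ω, x ω * y ω ∂μ) * (∫ ω, z ω * w ω ∂μ)
  - (∫ ω, x ω * z ω ∂μ) * (∫ ω, y ω * w ω ∂μ)
  - (∫ ω, x ω * w ω ∂μ) * (∫ ω, y ω * z ω ∂μ)
  + 2 * (∫ ω, x ω * y ω ∂μ) * (∫ ω, z ω ∂μ) * (∫ ω, w ω ∂μ)
  + 2 * (∫ ω, x ω * z ω ∂μ) * (∫ ω, y ω ∂μ) * (∫ ω, w ω ∂μ)
  + 2 * (∫ ω, x ω * w ω ∂μ) * (∫ ω, y ω ∂μ) * (∫ ω, z ω ∂μ)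
  + 2 * (∫ ω, y ω * z ω ∂μ) * (∫ ω, x ω ∂μ) * (∫ ω, w ω ∂μ)
  + 2 * (∫ ω, y ω * w ω ∂μ) * (∫ ω, x ω ∂μ) * (∫ ω, z ω ∂μ)
  + 2 * (∫ ω, z ω * w ω ∂μ) * (∫ ω, x ω ∂μ) * (∫ ω, y ω ∂μ)
  - 6 * (∫ ω, x ω ∂μ) * (∫ ω, y ω ∂μ) * (∫ ω, z ω ∂μ) * (∫ ω, w ω ∂μ)

/-! Expanding a product of sample sums, each pair of indices contributes `E[f g]` on the
diagonal and, by independence and identical distribution, `E f · E g` off it. With `m` diagonal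
and `m (m - 1)` off-diagonal pairs, the weights `(m + 1) / (m (m - 1))` and `1 / (m (m - 1))` of
the estimator cancel the diagonal contributions of the two product terms against the mean of
`|A|²|B|² = (A B̄)(Ā B)`, leaving `E[|A|²|B|²] - E|A|² E|B|² - E[A B̄] E[Ā B]`. Once all means and
`E[AB]` vanish, this is exactly what remains of the fourth cumulant `C₄(a, a*, b, b*)`. -/

open scoped ComplexConjugate

section
variable {Ω ι β 𝕜 : Type*} [MeasurableSpace Ω] [RCLike 𝕜] {μ : Measure Ω}

instance ENNReal.holderTriple_four_four_two : ENNReal.HolderTriple 4 4 2 := ⟨by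
  rw [← ENNReal.add_halves (2⁻¹ : ENNReal), ENNReal.div_eq_inv_mul,
    ← ENNReal.mul_inv (by simp) (by simp)]
  norm_num⟩

theorem integral_sum_mul_sum_eq [Fintype ι] {F G : ι → Ω → 𝕜} {d c : 𝕜}
    (hint : ∀ i j, Integrable (fun ω => F i ω * G j ω) μ)
    (hdiag : ∀ i, ∫ ω, F i ω * G i ω ∂μ = d)
    (hoff : ∀ i j, i ≠ j → ∫ ω, F i ω * G j ω ∂μ = c) :
    ∫ ω, (∑ i, F i ω) * ∑ j, G j ω ∂μ
      = Fintype.card ι * d + Fintype.card ι * (Fintype.card ι - 1) * c := by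
  classical
  have hentry : ∀ i j, ∫ ω, F i ω * G j ω ∂μ = c + if i = j then d - c else 0 := by
    intro i j
    split_ifs with h
    · subst h; rw [hdiag]; ring
    · rw [hoff i j h]; ring
  simp_rw [Finset.sum_mul_sum]
  rw [integral_finsetSum _ fun i _ => integrable_finsetSum _ fun j _ => hint i j]
  simp_rw [integral_finsetSum _ fun j _ => hint _ j, hentry, Finset.sum_add_distrib,
    Finset.sum_ite_eq, Finset.mem_univ, if_true, Finset.sum_const, Finset.card_univ, nsmul_eq_mul]
  ring

variable [Fintype ι] [MeasurableSpace β] {V : ι → Ω → β} {i₀ : ι}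

theorem integral_sum_comp_of_identDistrib
    (hident : ∀ i, IdentDistrib (V i) (V i₀) μ μ) {f : β → 𝕜} (hf : Measurable f) (hfi : Integrable (fun ω => f (V i₀ ω)) μ) :
    ∫ ω, ∑ i, f (V i ω) ∂μ = Fintype.card ι * ∫ ω, f (V i₀ ω) ∂μ := by
  have hint : ∀ i, Integrable (fun ω => f (V i ω)) μ := fun i =>
    ((hident i).comp hf).integrable_iff.mpr hfi
  have hE : ∀ i, ∫ ω, f (V i ω) ∂μ = ∫ ω, f (V i₀ ω) ∂μ := fun i =>
    ((hident i).comp hf).integral_eq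
  rw [integral_finsetSum _ fun i _ => hint i]
  simp_rw [hE, Finset.sum_const, Finset.card_univ, nsmul_eq_mul]

theorem integral_sum_comp_mul_sum_comp_of_iid (hindep : iIndepFun V μ)
    (hident : ∀ i, IdentDistrib (V i) (V i₀) μ μ) {f g : β → 𝕜} (hf : Measurable f)
    (hg : Measurable g) (hf2 : MemLp (fun ω => f (V i₀ ω)) 2 μ)
    (hg2 : MemLp (fun ω => g (V i₀ ω)) 2 μ) :
    ∫ ω, (∑ i, f (V i ω)) * ∑ i, g (V i ω) ∂μ
      = Fintype.card ι * ∫ ω, f (V i₀ ω) * g (V i₀ ω) ∂μ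
        + Fintype.card ι * (Fintype.card ι - 1)
          * ((∫ ω, f (V i₀ ω) ∂μ) * ∫ ω, g (V i₀ ω) ∂μ) := by
  refine integral_sum_mul_sum_eq (fun i j => ?_) (fun i => ?_) (fun i j hij => ?_)
  · exact (((hident i).comp hf).memLp_iff.mpr hf2).integrable_mul
      (((hident j).comp hg).memLp_iff.mpr hg2)
  · exact ((hident i).comp (hf.mul hg)).integral_eq
  · rw [(hindep.indepFun hij).integral_fun_comp_mul_comp (hident i).aemeasurable_fst
      (hident j).aemeasurable_fst hf.aestronglyMeasurable hg.aestronglyMeasurable]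
    exact congr_arg₂ (· * ·) ((hident i).comp hf).integral_eq ((hident j).comp hg).integral_eq

/-- `c₄⁽ᶜᵇ⁾` as a function of the sample sums (not means) of `f g`, `f`, `g`, `r` and `s`. -/
def cbEstimator (m : ℕ) (sfg sf sg sr ss : 𝕜) : 𝕜 :=
  (((m : 𝕜) + 1) * ((m : 𝕜)⁻¹ * sfg)
    - (m : 𝕜) * (((m : 𝕜)⁻¹ * sf) * ((m : 𝕜)⁻¹ * sg) + ((m : 𝕜)⁻¹ * sr) * ((m : 𝕜)⁻¹ * ss)))
    / ((m : 𝕜) - 1)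

theorem cbEstimator_eq {m : ℕ} (hm : 2 ≤ m) (sfg sf sg sr ss : 𝕜) :
    cbEstimator m sfg sf sg sr ss
      = ((m + 1) / (m * (m - 1))) * sfg - (1 / (m * (m - 1))) * (sf * sg)
        - (1 / (m * (m - 1))) * (sr * ss) := by
  have hm0 : (m : 𝕜) ≠ 0 := by exact_mod_cast (by omega : m ≠ 0)
  have hm1 : (m : 𝕜) - 1 ≠ 0 := sub_ne_zero.mpr (by exact_mod_cast (by omega : m ≠ 1))
  unfold cbEstimator
  field_simp
  ring

theorem integral_cbEstimator_of_iid {m : ℕ} (hm : 2 ≤ m) {V : Fin m → Ω → β} {i₀ : Fin m}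
    (hindep : iIndepFun V μ) (hident : ∀ i, IdentDistrib (V i) (V i₀) μ μ)
    {f g r s : β → 𝕜} (hf : Measurable f) (hg : Measurable g) (hr : Measurable r)
    (hs : Measurable s) (hf2 : MemLp (fun ω => f (V i₀ ω)) 2 μ)
    (hg2 : MemLp (fun ω => g (V i₀ ω)) 2 μ) (hr2 : MemLp (fun ω => r (V i₀ ω)) 2 μ)
    (hs2 : MemLp (fun ω => s (V i₀ ω)) 2 μ) (hfg : ∀ b, f b * g b = r b * s b) :
    ∫ ω, cbEstimator m (∑ i, f (V i ω) * g (V i ω)) (∑ i, f (V i ω)) (∑ i, g (V i ω))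
        (∑ i, r (V i ω)) (∑ i, s (V i ω)) ∂μ
      = ∫ ω, f (V i₀ ω) * g (V i₀ ω) ∂μ - (∫ ω, f (V i₀ ω) ∂μ) * (∫ ω, g (V i₀ ω) ∂μ)
        - (∫ ω, r (V i₀ ω) ∂μ) * ∫ ω, s (V i₀ ω) ∂μ := by
  have hm0 : (m : 𝕜) ≠ 0 := by exact_mod_cast (by omega : m ≠ 0)
  have hm1 : (m : 𝕜) - 1 ≠ 0 := sub_ne_zero.mpr (by exact_mod_cast (by omega : m ≠ 1))
  have hsum2 : ∀ {h : β → 𝕜}, Measurable h → MemLp (fun ω => h (V i₀ ω)) 2 μ →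
      MemLp (fun ω => ∑ i, h (V i ω)) 2 μ := fun hh hh2 =>
    memLp_finsetSum _ fun i _ => ((hident i).comp hh).memLp_iff.mpr hh2
  have hfg_int : Integrable (fun ω => f (V i₀ ω) * g (V i₀ ω)) μ := hf2.integrable_mul hg2
  have hU : Integrable (fun ω => ∑ i, f (V i ω) * g (V i ω)) μ :=
    integrable_finsetSum _ fun i _ => ((hident i).comp (hf.mul hg)).integrable_iff.mpr hfg_int
  have hFG : Integrable (fun ω => (∑ i, f (V i ω)) * ∑ i, g (V i ω)) μ :=
    (hsum2 hf hf2).integrable_mul (hsum2 hg hg2)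
  have hRS : Integrable (fun ω => (∑ i, r (V i ω)) * ∑ i, s (V i ω)) μ :=
    (hsum2 hr hr2).integrable_mul (hsum2 hs hs2)
  have hrs : ∫ ω, r (V i₀ ω) * s (V i₀ ω) ∂μ = ∫ ω, f (V i₀ ω) * g (V i₀ ω) ∂μ := by
    simp_rw [hfg]
  simp_rw [cbEstimator_eq hm]
  rw [integral_sub, integral_sub, integral_const_mul, integral_const_mul, integral_const_mul,
    integral_sum_comp_of_identDistrib (f := fun b => f b * g b) hident (hf.mul hg) hfg_int,
    integral_sum_comp_mul_sum_comp_of_iid hindep hident hf hg hf2 hg2,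
    integral_sum_comp_mul_sum_comp_of_iid hindep hident hr hs hr2 hs2, hrs, Fintype.card_fin]
  · field_simp
    ring
  exacts [hU.const_mul _, hFG.const_mul _, (hU.const_mul _).sub (hFG.const_mul _),
    hRS.const_mul _]

end

theorem cum4_eq_of_integral_eq_zero {Ω : Type*} [MeasurableSpace Ω] {μ : Measure Ω}
    {x y z w : Ω → ℂ} (hx : ∫ ω, x ω ∂μ = 0) (hy : ∫ ω, y ω ∂μ = 0) (hz : ∫ ω, z ω ∂μ = 0)
    (hw : ∫ ω, w ω ∂μ = 0) :
    cum4 μ x y z w = ∫ ω, x ω * y ω * z ω * w ω ∂μ - (∫ ω, x ω * y ω ∂μ) * (∫ ω, z ω * w ω ∂μ)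
      - (∫ ω, x ω * z ω ∂μ) * (∫ ω, y ω * w ω ∂μ) - (∫ ω, x ω * w ω ∂μ) * ∫ ω, y ω * z ω ∂μ := by
  simp only [cum4, hx, hy, hz, hw]
  ring

theorem unbiased_c4_cb {Ω : Type*} [MeasurableSpace Ω] (μ : Measure Ω)
    (m : ℕ) (hm : 2 ≤ m)
    (A B : Fin m → Ω → ℂ)
    (hindep : iIndepFun (fun i ω => (A i ω, B i ω)) μ)
    (hident : ∀ i, IdentDistrib (fun ω => (A i ω, B i ω)) (fun ω => (A ⟨0, by omega⟩ ω, B ⟨0, by omega⟩ ω)) μ μ)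
    (hA : MemLp (A ⟨0, by omega⟩) 4 μ)
    (hB : MemLp (B ⟨0, by omega⟩) 4 μ)
    (hEA : (∫ ω, A ⟨0, by omega⟩ ω ∂μ) = 0) (hEB : (∫ ω, B ⟨0, by omega⟩ ω ∂μ) = 0)
    (hEAB : (∫ ω, A ⟨0, by omega⟩ ω * B ⟨0, by omega⟩ ω ∂μ) = 0) :
    (∫ ω, (((m:ℂ)+1) * ((m:ℂ)⁻¹ * ∑ i, A i ω * (starRingEnd ℂ) (A i ω) * (B i ω * (starRingEnd ℂ) (B i ω))) - (m:ℂ) * (((m:ℂ)⁻¹ * ∑ i, A i ω * (starRingEnd ℂ) (A i ω)) * ((m:ℂ)⁻¹ * ∑ i, B i ω * (starRingEnd ℂ) (B i ω)) + ((m:ℂ)⁻¹ * ∑ i, A i ω * (starRingEnd ℂ) (B i ω)) * ((m:ℂ)⁻¹ * ∑ i, (starRingEnd ℂ) (A i ω) * B i ω))) / ((m:ℂ)-1) ∂μ) = (∫ ω, A ⟨0, by omega⟩ ω * (starRingEnd ℂ) (A ⟨0, by omega⟩ ω) * (B ⟨0, by omega⟩ ω * (starRingEnd ℂ) (B ⟨0,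 by omega⟩ ω)) ∂μ) - (∫ ω, A ⟨0, by omega⟩ ω * (starRingEnd ℂ) (A ⟨0, by omega⟩ ω) ∂μ) * (∫ ω, B ⟨0, by omega⟩ ω * (starRingEnd ℂ) (B ⟨0, by omega⟩ ω) ∂μ) - (∫ ω, A ⟨0, by omega⟩ ω * (starRingEnd ℂ) (B ⟨0, by omega⟩ ω) ∂μ) * (∫ ω, (starRingEnd ℂ) (A ⟨0, by omega⟩ ω) * B ⟨0, by omega⟩ ω ∂μ) ∧
    (∫ ω, A ⟨0, by omega⟩ ω * (starRingEnd ℂ) (A ⟨0, by omega⟩ ω) * (B ⟨0, by omega⟩ ω * (starRingEnd ℂ) (B ⟨0, by omega⟩ ω)) ∂μ) - (∫ ω, A ⟨0, by omega⟩ ω * (starRingEnd ℂ) (A ⟨0, by omega⟩ ω) ∂μ) * (∫ ω, B ⟨0, by omega⟩ ω * (starRingEnd ℂ) (B ⟨0, by omega⟩ ω) ∂μ) - (∫ ω, A ⟨0, by omega⟩ ω * (starRingEnd ℂ) (B ⟨0, by omega⟩ ω) ∂μ) * (∫ ω, (starRingEnd ℂ) (A ⟨0, by omega⟩ ω) * B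 ⟨0, by omega⟩ ω ∂μ) = cum4 μ (A ⟨0, by omega⟩) (fun ω => (starRingEnd ℂ) (A ⟨0, by omega⟩ ω)) (B ⟨0, by omega⟩) (fun ω => (starRingEnd ℂ) (B ⟨0, by omega⟩ ω)) := by
  refine ⟨integral_cbEstimator_of_iid (V := fun i ω => (A i ω, B i ω))
    (f := fun p => p.1 * conj p.1) (g := fun p => p.2 * conj p.2)
    (r := fun p => p.1 * conj p.2) (s := fun p => conj p.1 * p.2) hm hindep hident
    (by fun_prop) (by fun_prop) (by fun_prop) (by fun_prop) (hA.star.mul' hA) (hB.star.mul' hB)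
    (hB.star.mul' hA) (hB.mul' hA.star) (fun p => by ring), ?_⟩
  have hconj : ∀ X : Ω → ℂ, ∫ ω, X ω ∂μ = 0 → ∫ ω, conj (X ω) ∂μ = 0 := fun X hX => by
    rw [integral_conj, hX, map_zero]
  rw [cum4_eq_of_integral_eq_zero hEA (hconj _ hEA) hEB (hconj _ hEB), hEAB]
  simp_rw [← map_mul, hconj _ hEAB, mul_assoc]
  ring
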